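/- arXiv:1912.06504 — 3 statements merged into one kernel-verified Lean document; each statement's English description precedes it below -/
import Mathlib

section
/- Let Λ(w,η) = e^w · Γ(w+η) / (√(2π) · exp((w+η-1/2)·Log w)), where Γ is the complex Gamma function and Log is the principal branch of the logarithm on ℂ ∖ ℝ_{≤0}. Then for all w ∈ ℂ with Im(w) > 0 and all η ∈ ℂ with w+η ∉ ℤ, one has Λ(w,η)·Λ(-w,1-η) = (1 - e^{2πi(w+η)})^{-1}. -/
/-!
With `z = w + η`, the factors `e^{±w}` cancel and Euler's reflection formula turns the product
of the Gamma factors into `π / sin (π z)`. For `Im w > 0` the principal logarithm satisfies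
`log (-w) = log w - π i`, so the two normalising exponentials multiply to `-i e^{π i z}`, and
`-2 i sin (π z) e^{π i z} = 1 - e^{2 π i z}`.
-/

open Complex

/-- The normalized Gamma-type function `Λ(w,η)` of Barbieri's solution to the
Riemann–Hilbert problem, defined using the principal branch of the logarithm. -/
noncomputable def Lam (w η : ℂ) : ℂ :=
  Complex.exp w * Complex.Gamma (w + η) /
    ((Real.sqrt (2 * Real.pi) : ℂ) * Complex.exp ((w + η - 1 / 2) * Complex.log w))

open scoped Real

namespace Complex

theorem log_neg_of_im_pos {w : ℂ} (hw : 0 < w.im) : log (-w) = log w - π * I := by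
  rw [log, log, norm_neg, arg_neg_eq_arg_sub_pi_of_im_pos hw]
  push_cast
  ring

theorem sin_pi_mul_ne_zero {z : ℂ} (hz : ∀ n : ℤ, z ≠ n) : sin (π * z) ≠ 0 := by
  rw [sin_ne_zero_iff]
  intro n hn
  refine hz n (mul_left_cancel₀ (ofReal_ne_zero.mpr Real.pi_ne_zero) ?_)
  rw [hn, mul_comm]

theorem one_sub_exp_two_pi_I_mul (z : ℂ) :
    1 - exp (2 * π * I * z) = -2 * I * sin (π * z) * exp (π * I * z) := by
  have hsin : 2 * sin (π * z) = (exp (-(π * I * z)) - exp (π * I * z)) * I := by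
    rw [two_sin]; ring_nf
  have hsq : exp (2 * π * I * z) = exp (π * I * z) * exp (π * I * z) := by
    rw [← exp_add]; ring_nf
  have hinv : exp (-(π * I * z)) * exp (π * I * z) = 1 := by
    rw [← exp_add, neg_add_cancel, exp_zero]
  linear_combination (I * exp (π * I * z)) * hsin - hsq
    + exp (π * I * z) * (exp (-(π * I * z)) - exp (π * I * z)) * I_sq - hinv

theorem exp_mul_log_mul_exp_mul_log_neg {w : ℂ} (hw : 0 < w.im) (z : ℂ) :
    exp ((z - 1 / 2) * log w) * exp ((1 - z - 1 / 2) * log (-w)) = -I * exp (π * I * z) := by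
  have hexponent : (z - 1 / 2) * log w + (1 - z - 1 / 2) * (log w - π * I) =
      log (-I) + π * I * z := by
    rw [log_neg_I]; ring
  rw [← exp_add, log_neg_of_im_pos hw, hexponent, exp_add, exp_log (neg_ne_zero.mpr I_ne_zero)]

end Complex

theorem Lam_mul_Lam_neg_one_sub {w : ℂ} (hw : 0 < w.im) (η : ℂ) :
    Lam w η * Lam (-w) (1 - η) =
      Gamma (w + η) * Gamma (1 - (w + η)) / (2 * π * (-I * exp (π * I * (w + η)))) := by
  have hsqrt : (Real.sqrt (2 * π) : ℂ) * (Real.sqrt (2 * π) : ℂ) = 2 * π := by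
    rw [← ofReal_mul, Real.mul_self_sqrt (by positivity)]
    push_cast; ring
  have hexp : exp w * exp (-w) = 1 := by rw [← exp_add, add_neg_cancel, exp_zero]
  rw [Lam, Lam, show -w + (1 - η) = 1 - (w + η) by ring, div_mul_div_comm,
    mul_mul_mul_comm (exp w), hexp, one_mul, mul_mul_mul_comm _ (exp _), hsqrt,
    exp_mul_log_mul_exp_mul_log_neg hw]

theorem Lam_reflection_upper (w η : ℂ) (hw : 0 < w.im) (hn : ∀ n : ℤ, w + η ≠ (n : ℂ)) :
    Lam w η * Lam (-w) (1 - η) =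
      (1 - Complex.exp (2 * (Real.pi : ℂ) * Complex.I * (w + η)))⁻¹ := by
  have hsin : sin (π * (w + η)) ≠ 0 := sin_pi_mul_ne_zero hn
  have hπ : (π : ℂ) ≠ 0 := ofReal_ne_zero.mpr Real.pi_ne_zero
  rw [Lam_mul_Lam_neg_one_sub hw, Gamma_mul_Gamma_one_sub, one_sub_exp_two_pi_I_mul]
  field_simp
end

section
/- Let U ⊆ ℂⁿ × ℂⁿ be open, J : U → ℂ holomorphic (or smooth), and η = (η_{jk}) a constant antisymmetric n×n matrix. Suppose J satisfies the Joyce PDE: ∂²J/∂θ_i∂z_j - ∂²J/∂θ_j∂z_i = ∑_{p,q} η_{pq}(∂²J/∂θ_i∂θ_p)(∂²J/∂θ_j∂θ_q) for all i,j, where (z,θ) are the coordinates on ℂⁿ×ℂⁿ. Define for each ℏ ∈ ℂ* the vector fields X_i^{(ℏ)} = ∂/∂z_i + ℏ^{-1}∂/∂θ_i + ∑_{j,k} η_{jk}(∂²J/∂θ_i∂θ_j)·∂/∂θ_k. Then for all i₁, i₂ and all ℏ ∈ ℂ*, the Lie bracket [X_{i₁}^{(ℏ)}, X_{i₂}^{(ℏ)}]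 vanishes on U. -/
/-- Partial derivative of a function of `n` complex variables in the `i`-th coordinate. -/
noncomputable def pd {n : ℕ} (i : Fin n) (g : (Fin n → ℂ) → ℂ) : (Fin n → ℂ) → ℂ :=
  fun x => deriv (fun t => g (Function.update x i t)) (x i)

/-- The first-order differential operator given by the vector field
`X_i^{(ℏ)} = ∂/∂z_i + ℏ⁻¹ ∂/∂θ_i + ∑_{j,k} η_{jk} (∂²J/∂θ_i∂θ_j) ∂/∂θ_k`,
acting on a function `F(z,θ)`. -/
noncomputable def vecField {n : ℕ} (η : Fin n → Fin n → ℂ)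
    (J : (Fin n → ℂ) → (Fin n → ℂ) → ℂ) (ℏ : ℂ) (i : Fin n)
    (F : (Fin n → ℂ) → (Fin n → ℂ) → ℂ) : (Fin n → ℂ) → (Fin n → ℂ) → ℂ :=
  fun z θ => pd i (fun z' => F z' θ) z + ℏ⁻¹ * pd i (F z) θ +
    ∑ j, ∑ k, η j k * pd j (pd i (J z)) θ * pd k (F z) θ

/-- The `θ_m`-coefficient of the vector field `X_i^{(ℏ)}`. -/
noncomputable def thetaCoef {n : ℕ} (η : Fin n → Fin n → ℂ)
    (J : (Fin n → ℂ) → (Fin n → ℂ) → ℂ) (ℏ : ℂ) (i m : Fin n) :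
    (Fin n → ℂ) → (Fin n → ℂ) → ℂ :=
  fun z θ => (if i = m then ℏ⁻¹ else 0) + ∑ j, η j m * pd j (pd i (J z)) θ

/-- The `z_m`-coefficient of the vector field `X_i^{(ℏ)}` (a constant). -/
noncomputable def zCoef {n : ℕ} (ℏ : ℂ) (i m : Fin n) :
    (Fin n → ℂ) → (Fin n → ℂ) → ℂ :=
  fun _ _ => if i = m then 1 else 0

/-!
Write `∂_v` for the directional derivative on `ℂⁿ × ℂⁿ`. The `θ_m`-component of
`X_i(thetaCoef i' m)` is
`∑ₗ η_{lm} ∂_{θ_l}∂_{z_i}∂_{θ_{i'}}J + ℏ⁻¹ ∑ₗ η_{lm} ∂_{θ_i}∂_{θ_l}∂_{θ_{i'}}J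
  + ∑ η_{jk} η_{lm} ∂_{θ_j}∂_{θ_i}J · ∂_{θ_k}∂_{θ_l}∂_{θ_{i'}}J`. The `ℏ⁻¹`-part is symmetric in
`i, i'` because third derivatives commute. Differentiating the Joyce PDE in `θ_l` turns the
antisymmetric part of the first sum into products of second and third derivatives, which after
reindexing with `η_{jk} = -η_{kj}` cancel the antisymmetric part of the last sum. The
`z`-coefficients are constant, so the `z`-components of the bracket vanish trivially.
-/

open Finset

section LineDeriv

variable {𝕜 : Type*} [NontriviallyNormedField 𝕜]
  {E : Type*} [NormedAddCommGroup E] [NormedSpace 𝕜 E]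
  {F : Type*} [NormedAddCommGroup F] [NormedSpace 𝕜 F] {x v : E}

theorem lineDeriv_const_add (c : F) (f : E → F) :
    lineDeriv 𝕜 (fun y => c + f y) x v = lineDeriv 𝕜 f x v :=
  deriv_const_add c

theorem lineDeriv_fun_sub {f g : E → F} (hf : LineDifferentiableAt 𝕜 f x v)
    (hg : LineDifferentiableAt 𝕜 g x v) :
    lineDeriv 𝕜 (fun y => f y - g y) x v = lineDeriv 𝕜 f x v - lineDeriv 𝕜 g x v :=
  deriv_fun_sub hf hg

theorem lineDeriv_fun_sum {ι : Type*} {s : Finset ι} {f : ι → E → F}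
    (hf : ∀ i ∈ s, LineDifferentiableAt 𝕜 (f i) x v) :
    lineDeriv 𝕜 (fun y => ∑ i ∈ s, f i y) x v = ∑ i ∈ s, lineDeriv 𝕜 (f i) x v :=
  deriv_fun_sum hf

theorem lineDeriv_const_mul (c : 𝕜) (f : E → 𝕜) :
    lineDeriv 𝕜 (fun y => c * f y) x v = c * lineDeriv 𝕜 f x v :=
  congrFun (deriv_const_mul_field' c) 0

theorem lineDeriv_fun_mul {f g : E → 𝕜} (hf : LineDifferentiableAt 𝕜 f x v)
    (hg : LineDifferentiableAt 𝕜 g x v) :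
    lineDeriv 𝕜 (fun y => f y * g y) x v = lineDeriv 𝕜 f x v * g x + f x * lineDeriv 𝕜 g x v := by
  simpa [lineDeriv] using deriv_fun_mul hf hg

theorem lineDeriv_comp_prodMk_left {E' : Type*} [NormedAddCommGroup E'] [NormedSpace 𝕜 E']
    (G : E × E' → F) (x : E) (y : E') (v : E) :
    lineDeriv 𝕜 (fun x' => G (x', y)) x v = lineDeriv 𝕜 G (x, y) (v, 0) := by
  simp [lineDeriv]

theorem lineDeriv_comp_prodMk_right {E' : Type*} [NormedAddCommGroup E'] [NormedSpace 𝕜 E']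
    (G : E' × E → F) (x : E) (y : E') (v : E) :
    lineDeriv 𝕜 (fun x' => G (y, x')) x v = lineDeriv 𝕜 G (y, x) (0, v) := by
  simp [lineDeriv]

variable {G : E → F} {U : Set E}

theorem ContDiffOn.lineDifferentiableAt {n : WithTop ℕ∞} (hG : ContDiffOn 𝕜 n G U) (hU : IsOpen U)
    (hn : n ≠ 0) (hx : x ∈ U) (v : E) : LineDifferentiableAt 𝕜 G x v :=
  ((hG.contDiffAt (hU.mem_nhds hx)).differentiableAt hn).lineDifferentiableAt

theorem ContDiffOn.lineDeriv_eq_fderiv {n : WithTop ℕ∞} (hG : ContDiffOn 𝕜 n G U) (hU : IsOpen U)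
    (hn : n ≠ 0) (hx : x ∈ U) (v : E) : lineDeriv 𝕜 G x v = fderiv 𝕜 G x v :=
  ((hG.contDiffAt (hU.mem_nhds hx)).differentiableAt hn).lineDeriv_eq_fderiv

theorem ContDiffOn.lineDeriv_apply {m n : WithTop ℕ∞} (hG : ContDiffOn 𝕜 n G U) (hU : IsOpen U)
    (hmn : m + 1 ≤ n) (v : E) : ContDiffOn 𝕜 m (lineDeriv 𝕜 G · v) U :=
  ((hG.fderiv_of_isOpen hU hmn).clm_apply contDiffOn_const).congr fun _ hx =>
    hG.lineDeriv_eq_fderiv hU (fun h => by simp [h] at hmn) hx v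

theorem ContDiffOn.lineDeriv_lineDeriv_comm {n : WithTop ℕ∞} (hG : ContDiffOn 𝕜 n G U)
    (hU : IsOpen U) (hn : minSmoothness 𝕜 2 ≤ n) (hx : x ∈ U) (u v : E) :
    lineDeriv 𝕜 (lineDeriv 𝕜 G · v) x u = lineDeriv 𝕜 (lineDeriv 𝕜 G · u) x v := by
  have hGx := hG.contDiffAt (hU.mem_nhds hx)
  have h2 : (2 : WithTop ℕ∞) ≤ n := le_minSmoothness.trans hn
  have hG' : DifferentiableAt 𝕜 (fderiv 𝕜 G) x :=
    (hGx.fderiv_right (m := 1) (by norm_num [h2])).differentiableAt one_ne_zero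
  have hfd (w : E) : lineDeriv 𝕜 (lineDeriv 𝕜 G · w) x = fun u => fderiv 𝕜 (fderiv 𝕜 G) x u w := by
    have hev : (lineDeriv 𝕜 G · w) =ᶠ[nhds x] (fderiv 𝕜 G · w) := by
      filter_upwards [hU.mem_nhds hx] with y hy
      exact hG.lineDeriv_eq_fderiv hU (fun h => by simp [h] at h2) hy w
    ext u
    rw [hev.lineDeriv_eq, (hG'.clm_apply (differentiableAt_const w)).lineDeriv_eq_fderiv]
    simp [fderiv_clm_apply hG' (differentiableAt_const w)]
  rw [hfd, hfd]
  exact hGx.isSymmSndFDerivAt hn u v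

end LineDeriv

section Contraction

variable {ι R : Type*} [Fintype ι] [CommRing R]

theorem sum_contract_of_symm (η : ι → ι → R) (x : ι → R) {S : ι → ι → R}
    (hS : ∀ b c, S b c = S c b) (m : ι) :
    ∑ j, η j m * ∑ r, ∑ q, η r q * x r * S j q = ∑ r, ∑ k, η r k * x r * ∑ l, η l m * S k l := by
  simp only [mul_sum]
  rw [sum_comm]
  refine sum_congr rfl fun r _ => ?_
  rw [sum_comm]
  refine sum_congr rfl fun q _ => sum_congr rfl fun j _ => ?_
  rw [hS]; ring

theorem theta_bracket_coeff_eq (η : ι → ι → R) (hη : ∀ i j, η i j = -η j i)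
    (A : ι → ι → R) (B C : ι → ι → ι → R)
    (hC₁ : ∀ a b c, C a b c = C b a c) (hC₂ : ∀ a b c, C a b c = C a c b)
    (h : R) (m i₁ i₂ : ι)
    (hB : ∀ a, B a i₁ i₂ - B a i₂ i₁ = ∑ r, ∑ q, η r q * (C a r i₂ * A q i₁ + A r i₂ * C a q i₁)) :
    ∑ l, η l m * B l i₁ i₂ + h * ∑ l, η l m * C i₁ l i₂
        + ∑ j, ∑ k, η j k * A j i₁ * ∑ l, η l m * C k l i₂
      = ∑ l, η l m * B l i₂ i₁ + h * ∑ l, η l m * C i₂ l i₁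
        + ∑ j, ∑ k, η j k * A j i₂ * ∑ l, η l m * C k l i₁ := by
  have hC : ∑ l, η l m * C i₁ l i₂ = ∑ l, η l m * C i₂ l i₁ :=
    sum_congr rfl fun l _ => by rw [hC₁, hC₂, hC₁ l]
  have h₁ : ∑ j, η j m * ∑ r, ∑ q, η r q * C j r i₂ * A q i₁
      = -∑ j, ∑ k, η j k * A j i₁ * ∑ l, η l m * C k l i₂ := by
    rw [← sum_contract_of_symm η _ (fun b c => hC₁ b c i₂), ← sum_neg_distrib]
    refine sum_congr rfl fun j _ => ?_
    rw [sum_comm, ← mul_neg, ← sum_neg_distrib]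
    congr 1
    refine sum_congr rfl fun r _ => ?_
    rw [← sum_neg_distrib]
    refine sum_congr rfl fun q _ => ?_
    rw [hη]; ring
  have h₂ := sum_contract_of_symm η (A · i₂) (fun b c => hC₁ b c i₁) m
  have hsplit : ∑ l, η l m * B l i₁ i₂ - ∑ l, η l m * B l i₂ i₁
      = ∑ j, η j m * ∑ r, ∑ q, η r q * C j r i₂ * A q i₁
        + ∑ j, η j m * ∑ r, ∑ q, η r q * A r i₂ * C j q i₁ := by
    simp only [← sum_sub_distrib, ← sum_add_distrib, ← mul_sub, hB, ← mul_add]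
    refine sum_congr rfl fun j _ => ?_
    simp only [mul_add, sum_add_distrib, mul_assoc]
  rw [hC]
  linear_combination hsplit + h₁ + h₂

end Contraction

section Joyce

variable {n : ℕ}

def zDir (i : Fin n) : (Fin n → ℂ) × (Fin n → ℂ) := (Pi.single i 1, 0)

def θDir (i : Fin n) : (Fin n → ℂ) × (Fin n → ℂ) := (0, Pi.single i 1)

-- `dirDeriv3 J u v w p = ∂_u ∂_v ∂_w J (p)`, with `J` uncurried to a function on `ℂⁿ × ℂⁿ`.
noncomputable def dirDeriv2 (J : (Fin n → ℂ) → (Fin n → ℂ) → ℂ)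
    (u v p : (Fin n → ℂ) × (Fin n → ℂ)) : ℂ :=
  lineDeriv ℂ (lineDeriv ℂ (Function.uncurry J) · v) p u

noncomputable def dirDeriv3 (J : (Fin n → ℂ) → (Fin n → ℂ) → ℂ)
    (u v w p : (Fin n → ℂ) × (Fin n → ℂ)) : ℂ :=
  lineDeriv ℂ (dirDeriv2 J v w) p u

-- No differentiability is needed: both sides differentiate the same function of one variable,
-- up to the shift `t ↦ t - x i`.
theorem pd_eq_lineDeriv (i : Fin n) (g : (Fin n → ℂ) → ℂ) (x : Fin n → ℂ) :
    pd i g x = lineDeriv ℂ g x (Pi.single i 1) := by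
  have hline : (fun t => g (Function.update x i t))
      = fun t => g (x + (t - x i) • Pi.single i 1) := by
    ext t
    congr 1
    ext j
    rcases eq_or_ne j i with rfl | hj <;> simp [*]
  rw [pd, hline]
  simpa [lineDeriv] using deriv_comp_sub_const (fun s : ℂ => g (x + s • Pi.single i 1)) (x i) (x i)

theorem pd_fst_eq_lineDeriv (G : (Fin n → ℂ) × (Fin n → ℂ) → ℂ) (i : Fin n) (z θ : Fin n → ℂ) :
    pd i (fun z' => G (z', θ)) z = lineDeriv ℂ G (z, θ) (zDir i) := by
  rw [pd_eq_lineDeriv, lineDeriv_comp_prodMk_left]; rfl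

theorem pd_snd_eq_lineDeriv (G : (Fin n → ℂ) × (Fin n → ℂ) → ℂ) (i : Fin n) (z θ : Fin n → ℂ) :
    pd i (fun θ' => G (z, θ')) θ = lineDeriv ℂ G (z, θ) (θDir i) := by
  rw [pd_eq_lineDeriv, lineDeriv_comp_prodMk_right]; rfl

variable (J : (Fin n → ℂ) → (Fin n → ℂ) → ℂ)

theorem pd_pd_eq_dirDeriv2 (i j : Fin n) (z θ : Fin n → ℂ) :
    pd j (pd i (J z)) θ = dirDeriv2 J (θDir j) (θDir i) (z, θ) := by
  have h : pd i (J z) = fun θ' => lineDeriv ℂ (Function.uncurry J) (z, θ') (θDir i) :=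
    funext fun θ' => pd_snd_eq_lineDeriv (Function.uncurry J) i z θ'
  rw [h, pd_snd_eq_lineDeriv (lineDeriv ℂ (Function.uncurry J) · (θDir i))]
  rfl

theorem pd_fst_pd_eq_dirDeriv2 (i j : Fin n) (z θ : Fin n → ℂ) :
    pd j (fun z' => pd i (J z') θ) z = dirDeriv2 J (zDir j) (θDir i) (z, θ) := by
  have h : (fun z' => pd i (J z') θ)
      = fun z' => lineDeriv ℂ (Function.uncurry J) (z', θ) (θDir i) :=
    funext fun z' => pd_snd_eq_lineDeriv (Function.uncurry J) i z' θ
  rw [h, pd_fst_eq_lineDeriv (lineDeriv ℂ (Function.uncurry J) · (θDir i))]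
  rfl

theorem vecField_eq (η : Fin n → Fin n → ℂ) (ℏ : ℂ) (i : Fin n)
    (F : (Fin n → ℂ) → (Fin n → ℂ) → ℂ) (z θ : Fin n → ℂ) :
    vecField η J ℏ i F z θ = lineDeriv ℂ (Function.uncurry F) (z, θ) (zDir i)
      + ℏ⁻¹ * lineDeriv ℂ (Function.uncurry F) (z, θ) (θDir i)
      + ∑ j, ∑ k, η j k * dirDeriv2 J (θDir j) (θDir i) (z, θ)
          * lineDeriv ℂ (Function.uncurry F) (z, θ) (θDir k) := by
  simp only [vecField, pd_pd_eq_dirDeriv2, ← pd_fst_eq_lineDeriv, ← pd_snd_eq_lineDeriv]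
  rfl

theorem uncurry_thetaCoef (η : Fin n → Fin n → ℂ) (ℏ : ℂ) (i m : Fin n) :
    Function.uncurry (thetaCoef η J ℏ i m)
      = fun p => (if i = m then ℏ⁻¹ else 0) + ∑ j, η j m * dirDeriv2 J (θDir j) (θDir i) p := by
  ext ⟨z, θ⟩
  simp [thetaCoef, pd_pd_eq_dirDeriv2]

variable {J} {U : Set ((Fin n → ℂ) × (Fin n → ℂ))} (hU : IsOpen U)
  (hJ : ContDiffOn ℂ ⊤ (Function.uncurry J) U)
include hU hJ

theorem contDiffOn_dirDeriv2 (u v : (Fin n → ℂ) × (Fin n → ℂ)) :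
    ContDiffOn ℂ ⊤ (dirDeriv2 J u v) U :=
  (hJ.lineDeriv_apply hU le_top v).lineDeriv_apply hU le_top u

variable {p : (Fin n → ℂ) × (Fin n → ℂ)} (hp : p ∈ U)
include hp

theorem dirDeriv3_comm_left (u v w : (Fin n → ℂ) × (Fin n → ℂ)) :
    dirDeriv3 J u v w p = dirDeriv3 J v u w p :=
  (hJ.lineDeriv_apply hU le_top w).lineDeriv_lineDeriv_comm hU le_top hp u v

theorem dirDeriv3_comm_right (u v w : (Fin n → ℂ) × (Fin n → ℂ)) :
    dirDeriv3 J u v w p = dirDeriv3 J u w v p := by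
  have h : dirDeriv2 J v w =ᶠ[nhds p] dirDeriv2 J w v := by
    filter_upwards [hU.mem_nhds hp] with q hq
    exact hJ.lineDeriv_lineDeriv_comm hU le_top hq v w
  exact h.lineDeriv_eq

theorem lineDeriv_uncurry_thetaCoef (η : Fin n → Fin n → ℂ) (ℏ : ℂ) (i m : Fin n)
    (w : (Fin n → ℂ) × (Fin n → ℂ)) :
    lineDeriv ℂ (Function.uncurry (thetaCoef η J ℏ i m)) p w
      = ∑ l, η l m * dirDeriv3 J w (θDir l) (θDir i) p := by
  rw [uncurry_thetaCoef, lineDeriv_const_add, lineDeriv_fun_sum fun l _ =>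
    (contDiffOn_const.mul (contDiffOn_dirDeriv2 hU hJ _ _)).lineDifferentiableAt hU (by simp) hp w]
  simp only [lineDeriv_const_mul]
  rfl

theorem vecField_thetaCoef (η : Fin n → Fin n → ℂ) (ℏ : ℂ) (i i' m : Fin n) :
    vecField η J ℏ i (thetaCoef η J ℏ i' m) p.1 p.2
      = ∑ l, η l m * dirDeriv3 J (θDir l) (zDir i) (θDir i') p
        + ℏ⁻¹ * ∑ l, η l m * dirDeriv3 J (θDir i) (θDir l) (θDir i') p
        + ∑ j, ∑ k, η j k * dirDeriv2 J (θDir j) (θDir i) p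
            * ∑ l, η l m * dirDeriv3 J (θDir k) (θDir l) (θDir i') p := by
  simp only [vecField_eq, Prod.mk.eta, lineDeriv_uncurry_thetaCoef hU hJ hp,
    dirDeriv3_comm_left hU hJ hp (zDir i)]

theorem lineDeriv_theta_joyce_pde (η : Fin n → Fin n → ℂ)
    (hPDE : ∀ z θ, (z, θ) ∈ U → ∀ i j,
      pd j (fun z' => pd i (J z') θ) z - pd i (fun z' => pd j (J z') θ) z =
        ∑ p, ∑ q, η p q * pd p (pd i (J z)) θ * pd q (pd j (J z)) θ)
    (a i j : Fin n) :
    dirDeriv3 J (θDir a) (zDir j) (θDir i) p - dirDeriv3 J (θDir a) (zDir i) (θDir j) p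
      = ∑ r, ∑ q, η r q * (dirDeriv3 J (θDir a) (θDir r) (θDir i) p
          * dirDeriv2 J (θDir q) (θDir j) p
        + dirDeriv2 J (θDir r) (θDir i) p * dirDeriv3 J (θDir a) (θDir q) (θDir j) p) := by
  have hd {f : (Fin n → ℂ) × (Fin n → ℂ) → ℂ} (hf : ContDiffOn ℂ ⊤ f U) :
      LineDifferentiableAt ℂ f p (θDir a) :=
    hf.lineDifferentiableAt hU (by simp) hp _
  have hc := contDiffOn_dirDeriv2 hU hJ
  have hpde : (fun p => dirDeriv2 J (zDir j) (θDir i) p - dirDeriv2 J (zDir i) (θDir j) p)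
      =ᶠ[nhds p] fun p => ∑ r, ∑ q, η r q * (dirDeriv2 J (θDir r) (θDir i) p
        * dirDeriv2 J (θDir q) (θDir j) p) := by
    filter_upwards [hU.mem_nhds hp] with q hq
    simpa only [pd_fst_pd_eq_dirDeriv2, pd_pd_eq_dirDeriv2, mul_assoc] using hPDE q.1 q.2 hq i j
  calc _ = lineDeriv ℂ (fun p => dirDeriv2 J (zDir j) (θDir i) p
        - dirDeriv2 J (zDir i) (θDir j) p) p (θDir a) :=
        (lineDeriv_fun_sub (hd (hc _ _)) (hd (hc _ _))).symm
    _ = _ := hpde.lineDeriv_eq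
    _ = _ := by
      rw [lineDeriv_fun_sum fun r _ => hd <|
        ContDiffOn.sum fun q _ => contDiffOn_const.mul ((hc _ _).mul (hc _ _))]
      refine sum_congr rfl fun r _ => ?_
      rw [lineDeriv_fun_sum fun q _ => hd <| contDiffOn_const.mul ((hc _ _).mul (hc _ _))]
      refine sum_congr rfl fun q _ => ?_
      rw [lineDeriv_const_mul, lineDeriv_fun_mul (hd (hc _ _)) (hd (hc _ _))]
      rfl

end Joyce

theorem joyce_pencil_flat_general {n : ℕ} (η : Fin n → Fin n → ℂ)
    (hη : ∀ i j, η i j = -η j i)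
    (U : Set ((Fin n → ℂ) × (Fin n → ℂ))) (hU : IsOpen U)
    (J : (Fin n → ℂ) → (Fin n → ℂ) → ℂ)
    (hsmooth : ContDiffOn ℂ ⊤ (fun p => J p.1 p.2) U)
    (hPDE : ∀ z θ, (z, θ) ∈ U → ∀ i j,
      pd j (fun z' => pd i (J z') θ) z - pd i (fun z' => pd j (J z') θ) z =
        ∑ p, ∑ q, η p q * pd p (pd i (J z)) θ * pd q (pd j (J z)) θ)
    (ℏ : ℂ) :
    ∀ i₁ i₂ m : Fin n, ∀ z θ, (z, θ) ∈ U →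
      vecField η J ℏ i₁ (thetaCoef η J ℏ i₂ m) z θ =
          vecField η J ℏ i₂ (thetaCoef η J ℏ i₁ m) z θ ∧
        vecField η J ℏ i₁ (zCoef ℏ i₂ m) z θ =
          vecField η J ℏ i₂ (zCoef ℏ i₁ m) z θ := by
  intro i₁ i₂ m z θ hp
  refine ⟨?_, by simp [vecField, zCoef, pd]⟩
  rw [vecField_thetaCoef hU hsmooth hp, vecField_thetaCoef hU hsmooth hp]
  exact theta_bracket_coeff_eq η hη (fun j i => dirDeriv2 J (θDir j) (θDir i) (z, θ))
    (fun a s t => dirDeriv3 J (θDir a) (zDir s) (θDir t) (z, θ))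
    (fun a b c => dirDeriv3 J (θDir a) (θDir b) (θDir c) (z, θ))
    (fun _ _ _ => dirDeriv3_comm_left hU hsmooth hp _ _ _)
    (fun _ _ _ => dirDeriv3_comm_right hU hsmooth hp _ _ _) ℏ⁻¹ m i₁ i₂
    (fun a => lineDeriv_theta_joyce_pde hU hsmooth hp η hPDE a i₂ i₁)

/-- If `J` satisfies the Joyce PDE on an open set `U`, then for every `ℏ ∈ ℂ*` the
vector fields `X_i^{(ℏ)}` pairwise commute on `U`: all components of the Lie bracket
`[X_{i₁}^{(ℏ)}, X_{i₂}^{(ℏ)}] = X_{i₁}(X_{i₂}^{coef}) - X_{i₂}(X_{i₁}^{coef})` vanish. -/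
theorem joyce_pencil_flat {n : ℕ} (η : Fin n → Fin n → ℂ)
    (hη : ∀ i j, η i j = -η j i)
    (U : Set ((Fin n → ℂ) × (Fin n → ℂ))) (hU : IsOpen U)
    (J : (Fin n → ℂ) → (Fin n → ℂ) → ℂ)
    (hsmooth : ContDiffOn ℂ ⊤ (fun p => J p.1 p.2) U)
    (hPDE : ∀ z θ, (z, θ) ∈ U → ∀ i j,
      pd j (fun z' => pd i (J z') θ) z - pd i (fun z' => pd j (J z') θ) z =
        ∑ p, ∑ q, η p q * pd p (pd i (J z)) θ * pd q (pd j (J z)) θ)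
    (ℏ : ℂ) (hℏ : ℏ ≠ 0) :
    ∀ i₁ i₂ m : Fin n, ∀ z θ, (z, θ) ∈ U →
      vecField η J ℏ i₁ (thetaCoef η J ℏ i₂ m) z θ =
          vecField η J ℏ i₂ (thetaCoef η J ℏ i₁ m) z θ ∧
        vecField η J ℏ i₁ (zCoef ℏ i₂ m) z θ =
          vecField η J ℏ i₂ (zCoef ℏ i₁ m) z θ :=
  joyce_pencil_flat_general η hη U hU J hsmooth hPDE ℏ
end

section
/- Let J : U × V → ℂ be holomorphic with U ⊆ (ℂ*)ⁿ open, homogeneous of degree -1 in z (i.e. J(λz,θ) = λ^{-1}J(z,θ) for λ near 1), and satisfying the Joyce PDE ∂²J/∂θ_i∂z_j - ∂²J/∂θ_j∂z_i = ∑_{p,q} η_{pq}(∂²J/∂θ_i∂θ_p)(∂²J/∂θ_j∂θ_q) for a constant antisymmetric matrix η. Define H(z,θ) = ∑_i z_i·∂J/∂θ_i. Then for all i: ∂H/∂z_i = -∑_{p,q} η_{pq}·(∂²J/∂θ_i∂θ_p)·(∂H/∂θ_q). -/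
open Filter

/-!
Since `H = ∑_j z_j ∂J/∂θ_j`, we have `∂H/∂z_i = ∂J/∂θ_i + ∑_j z_j ∂²J/∂z_i∂θ_j`. Contracting the
Joyce PDE with `z_j` rewrites the sum as
`∑_j z_j ∂²J/∂z_j∂θ_i - ∑_{p,q} η_{pq} (∂²J/∂θ_i∂θ_p) ∂H/∂θ_q`, and differentiating Euler's
relation `∑_j z_j ∂J/∂z_j = -J` in `θ_i` shows, by symmetry of second derivatives, that
`∑_j z_j ∂²J/∂z_j∂θ_i = -∂J/∂θ_i`, which cancels the first term. All the partial derivatives `pd`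
are read off the first and second Fréchet derivatives of `uncurry J`.
-/
open Topology ContinuousLinearMap Function

theorem sum_mul_apply_single {ι R : Type*} [Fintype ι] [DecidableEq ι] [CommSemiring R]
    [TopologicalSpace R] (f : (ι → R) →L[R] R) (z : ι → R) :
    ∑ j, z j * f (Pi.single j 1) = f z := by
  conv_rhs => rw [← Finset.univ_sum_single z, map_sum]
  refine Finset.sum_congr rfl fun j _ => ?_
  rw [← smul_eq_mul, ← map_smul, ← Pi.single_smul', smul_eq_mul, mul_one]

section Homogeneous

variable {𝕜 E E' : Type*} [NontriviallyNormedField 𝕜] [NormedAddCommGroup E] [NormedSpace 𝕜 E]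
  [NormedAddCommGroup E'] [NormedSpace 𝕜 E']

theorem fderiv_apply_fst_of_homogeneous {F : E × E' → 𝕜} {x : E × E'}
    (hF : DifferentiableAt 𝕜 F x) (hhom : ∀ᶠ t in 𝓝 (1 : 𝕜), F (t • x.1, x.2) = t⁻¹ * F x) :
    fderiv 𝕜 F x (x.1, 0) = -F x := by
  have hline : HasDerivAt (fun t : 𝕜 => (t • x.1, x.2)) (x.1, 0) 1 := by
    simpa using ((hasDerivAt_id (1 : 𝕜)).smul_const x.1).prodMk (hasDerivAt_const (1 : 𝕜) x.2)
  have hlhs : HasDerivAt (fun t : 𝕜 => F (t • x.1, x.2)) (fderiv 𝕜 F x (x.1, 0)) 1 :=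
    hF.hasFDerivAt.comp_hasDerivAt_of_eq 1 hline (by simp)
  have hrhs : HasDerivAt (fun t : 𝕜 => t⁻¹ * F x) (-F x) 1 := by
    simpa using (hasDerivAt_inv one_ne_zero).mul_const (F x)
  exact hlhs.unique (hrhs.congr_of_eventuallyEq hhom)

theorem fderiv_fderiv_apply_inr_fst_of_homogeneous {F : E × E' → 𝕜} {x : E × E'}
    (hF : ∀ᶠ y in 𝓝 x,
      DifferentiableAt 𝕜 F y ∧ ∀ᶠ t in 𝓝 (1 : 𝕜), F (t • y.1, y.2) = t⁻¹ * F y)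
    (hF' : DifferentiableAt 𝕜 (fderiv 𝕜 F) x) (v : E') :
    fderiv 𝕜 (fderiv 𝕜 F) x (0, v) (x.1, 0) = -fderiv 𝕜 F x (0, v) := by
  have heuler : (fun y => fderiv 𝕜 F y (y.1, 0)) =ᶠ[𝓝 x] fun y => -F y :=
    hF.mono fun y hy => fderiv_apply_fst_of_homogeneous hy.1 hy.2
  have hlhs := hF'.hasFDerivAt.clm_apply (hasFDerivAt_fst.prodMk (hasFDerivAt_const 0 _))
  have hrhs := (hF.self_of_nhds.1.hasFDerivAt).neg
  simpa [Prod.mk_zero_zero] using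
    congrArg (· (0, v)) ((hlhs.congr_of_eventuallyEq heuler.symm).unique hrhs)

end Homogeneous

theorem HasFDerivAt.clm_apply_const {𝕜 E E' F : Type*} [NontriviallyNormedField 𝕜]
    [NormedAddCommGroup E] [NormedSpace 𝕜 E] [NormedAddCommGroup E'] [NormedSpace 𝕜 E']
    [NormedAddCommGroup F] [NormedSpace 𝕜 F] {c : E → E' →L[𝕜] F} {c' : E →L[𝕜] E' →L[𝕜] F} {x : E}
    (hc : HasFDerivAt c c' x) (v : E') :
    HasFDerivAt (fun y => c y v) (c'.flip v) x := by
  simpa using hc.clm_apply (hasFDerivAt_const v x)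

section PartialDerivatives

variable {n : ℕ}

theorem pd_eq_of_hasFDerivAt {g : (Fin n → ℂ) → ℂ} {g' : (Fin n → ℂ) →L[ℂ] ℂ} {x : Fin n → ℂ}
    (hg : HasFDerivAt g g' x) (i : Fin n) : pd i g x = g' (Pi.single i 1) :=
  (hg.comp_hasDerivAt_of_eq (x i) (hasDerivAt_update x i (x i)) (by simp)).deriv

theorem Filter.EventuallyEq.pd_eq {g g' : (Fin n → ℂ) → ℂ} {x : Fin n → ℂ} (h : g =ᶠ[𝓝 x] g')
    (i : Fin n) : pd i g x = pd i g' x := by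
  refine EventuallyEq.deriv_eq (h.comp_tendsto ?_)
  simpa using (hasDerivAt_update x i (x i)).continuousAt.tendsto

theorem pd_snd_eq_of_hasFDerivAt {E : Type*} [NormedAddCommGroup E] [NormedSpace ℂ E]
    {g G : E × (Fin n → ℂ) → ℂ} {G' : E × (Fin n → ℂ) →L[ℂ] ℂ} {z : E} {θ : Fin n → ℂ}
    (hgG : g =ᶠ[𝓝 (z, θ)] G) (hG : HasFDerivAt G G' (z, θ)) (j : Fin n) :
    pd j (fun θ' => g (z, θ')) θ = G' (0, Pi.single j 1) := by
  have hslice : HasFDerivAt (fun θ' => G (z, θ')) (G'.comp (inr ℂ E _)) θ :=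
    hG.comp θ (hasFDerivAt_prodMk_right z θ)
  have hgG' : (fun θ' => g (z, θ')) =ᶠ[𝓝 θ] fun θ' => G (z, θ') :=
    ((continuous_const.prodMk continuous_id).tendsto θ).eventually hgG
  rw [hgG'.pd_eq, pd_eq_of_hasFDerivAt hslice]
  rfl

theorem pd_fst_eq_of_hasFDerivAt {E : Type*} [NormedAddCommGroup E] [NormedSpace ℂ E]
    {g G : (Fin n → ℂ) × E → ℂ} {G' : (Fin n → ℂ) × E →L[ℂ] ℂ} {z : Fin n → ℂ} {θ : E}
    (hgG : g =ᶠ[𝓝 (z, θ)] G) (hG : HasFDerivAt G G' (z, θ)) (j : Fin n) :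
    pd j (fun z' => g (z', θ)) z = G' (Pi.single j 1, 0) := by
  have hslice : HasFDerivAt (fun z' => G (z', θ)) (G'.comp (inl ℂ _ E)) z :=
    hG.comp z (hasFDerivAt_prodMk_left z θ)
  have hgG' : (fun z' => g (z', θ)) =ᶠ[𝓝 z] fun z' => G (z', θ) :=
    ((continuous_id.prodMk continuous_const).tendsto z).eventually hgG
  rw [hgG'.pd_eq, pd_eq_of_hasFDerivAt hslice]
  rfl

variable {J : (Fin n → ℂ) → (Fin n → ℂ) → ℂ} {z θ : Fin n → ℂ}

theorem pd_eq_fderiv_uncurry (hJ : DifferentiableAt ℂ (uncurry J) (z, θ)) (j : Fin n) :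
    pd j (J z) θ = fderiv ℂ (uncurry J) (z, θ) (0, Pi.single j 1) :=
  pd_snd_eq_of_hasFDerivAt EventuallyEq.rfl hJ.hasFDerivAt j

theorem sum_mul_pd_eq_fderiv_uncurry (hJ : DifferentiableAt ℂ (uncurry J) (z, θ)) :
    ∑ j, z j * pd j (J z) θ = fderiv ℂ (uncurry J) (z, θ) (0, z) := by
  simp only [pd_eq_fderiv_uncurry hJ]
  exact sum_mul_apply_single ((fderiv ℂ (uncurry J) (z, θ)).comp (inr ℂ _ _)) z

section SecondOrder

variable {B : (Fin n → ℂ) × (Fin n → ℂ) →L[ℂ] (Fin n → ℂ) × (Fin n → ℂ) →L[ℂ] ℂ}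

theorem pd_pd_eq_of_hasFDerivAt_fderiv
    (hJ : ∀ᶠ y in 𝓝 (z, θ), DifferentiableAt ℂ (uncurry J) y)
    (hJ' : HasFDerivAt (fderiv ℂ (uncurry J)) B (z, θ))
    (p k : Fin n) :
    pd p (pd k (J z)) θ = B (0, Pi.single p 1) (0, Pi.single k 1) :=
  pd_snd_eq_of_hasFDerivAt (g := fun y => pd k (J y.1) y.2)
    (hJ.mono fun _ hy => pd_eq_fderiv_uncurry hy k) (hJ'.clm_apply_const _) p

theorem pd_fst_pd_eq_of_hasFDerivAt_fderiv
    (hJ : ∀ᶠ y in 𝓝 (z, θ), DifferentiableAt ℂ (uncurry J) y)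
    (hJ' : HasFDerivAt (fderiv ℂ (uncurry J)) B (z, θ))
    (j k : Fin n) :
    pd j (fun z' => pd k (J z') θ) z = B (Pi.single j 1, 0) (0, Pi.single k 1) :=
  pd_fst_eq_of_hasFDerivAt (g := fun y => pd k (J y.1) y.2)
    (hJ.mono fun _ hy => pd_eq_fderiv_uncurry hy k) (hJ'.clm_apply_const _) j

theorem pd_sum_mul_pd_eq_of_hasFDerivAt_fderiv
    (hJ : ∀ᶠ y in 𝓝 (z, θ), DifferentiableAt ℂ (uncurry J) y)
    (hJ' : HasFDerivAt (fderiv ℂ (uncurry J)) B (z, θ))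
    (q : Fin n) :
    pd q (fun θ' => ∑ j, z j * pd j (J z) θ') θ = B (0, Pi.single q 1) (0, z) := by
  simpa [Prod.mk_zero_zero] using pd_snd_eq_of_hasFDerivAt
    (g := fun y : (Fin n → ℂ) × (Fin n → ℂ) => ∑ j, y.1 j * pd j (J y.1) y.2)
    (hJ.mono fun _ hy => sum_mul_pd_eq_fderiv_uncurry hy)
    (hJ'.clm_apply ((hasFDerivAt_const 0 _).prodMk hasFDerivAt_fst)) q

theorem pd_fst_sum_mul_pd_eq_of_hasFDerivAt_fderiv
    (hJ : ∀ᶠ y in 𝓝 (z, θ), DifferentiableAt ℂ (uncurry J) y)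
    (hJ' : HasFDerivAt (fderiv ℂ (uncurry J)) B (z, θ))
    (i : Fin n) :
    pd i (fun z' => ∑ j, z' j * pd j (J z') θ) z =
      B (Pi.single i 1, 0) (0, z) + fderiv ℂ (uncurry J) (z, θ) (0, Pi.single i 1) := by
  simpa [add_comm] using pd_fst_eq_of_hasFDerivAt
    (g := fun y : (Fin n → ℂ) × (Fin n → ℂ) => ∑ j, y.1 j * pd j (J y.1) y.2)
    (hJ.mono fun _ hy => sum_mul_pd_eq_fderiv_uncurry hy)
    (hJ'.clm_apply ((hasFDerivAt_const 0 _).prodMk hasFDerivAt_fst)) i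

end SecondOrder

theorem joyce_identity_of_fderiv (η : Fin n → Fin n → ℂ)
    (B : (Fin n → ℂ) × (Fin n → ℂ) →L[ℂ] (Fin n → ℂ) × (Fin n → ℂ) →L[ℂ] ℂ)
    (d : (Fin n → ℂ) × (Fin n → ℂ) →L[ℂ] ℂ) (z : Fin n → ℂ) (i : Fin n)
    (hsymm : B (z, 0) (0, Pi.single i 1) = B (0, Pi.single i 1) (z, 0))
    (heuler : B (0, Pi.single i 1) (z, 0) = -d (0, Pi.single i 1))
    (hpde : ∀ j,
      B (Pi.single j 1, 0) (0, Pi.single i 1) - B (Pi.single i 1, 0) (0, Pi.single j 1) =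
        ∑ p, ∑ q, η p q * B (0, Pi.single p 1) (0, Pi.single i 1) *
          B (0, Pi.single q 1) (0, Pi.single j 1)) :
    B (Pi.single i 1, 0) (0, z) + d (0, Pi.single i 1) =
      -∑ p, ∑ q, η p q * B (0, Pi.single p 1) (0, Pi.single i 1) *
        B (0, Pi.single q 1) (0, z) := by
  have hfst :
      ∑ j, z j * B (Pi.single j 1, 0) (0, Pi.single i 1) = B (z, 0) (0, Pi.single i 1) :=
    sum_mul_apply_single ((B.flip (0, Pi.single i 1)).comp (inl ℂ _ _)) z
  have hsnd : ∀ v, ∑ j, z j * B v (0, Pi.single j 1) = B v (0, z) :=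
    fun v => sum_mul_apply_single ((B v).comp (inr ℂ _ _)) z
  have hcontract : B (z, 0) (0, Pi.single i 1) - B (Pi.single i 1, 0) (0, z) =
      ∑ p, ∑ q, η p q * B (0, Pi.single p 1) (0, Pi.single i 1) *
        B (0, Pi.single q 1) (0, z) := by
    rw [← hfst, ← hsnd, ← Finset.sum_sub_distrib]
    simp_rw [← mul_sub, hpde, ← hsnd, Finset.mul_sum]
    rw [Finset.sum_comm]
    refine Finset.sum_congr rfl fun p _ => ?_
    rw [Finset.sum_comm]
    exact Finset.sum_congr rfl fun q _ => Finset.sum_congr rfl fun j _ => by ring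
  linear_combination -hcontract + hsymm + heuler

end PartialDerivatives

theorem joyce_H_identity_general {n : ℕ} (η : Fin n → Fin n → ℂ)
    (U : Set ((Fin n → ℂ) × (Fin n → ℂ))) (hU : IsOpen U)
    (J : (Fin n → ℂ) → (Fin n → ℂ) → ℂ)
    (hsmooth : ContDiffOn ℂ ⊤ (fun p => J p.1 p.2) U)
    (hhom : ∀ z θ, (z, θ) ∈ U →
      ∀ᶠ lam in nhds (1 : ℂ), J (lam • z) θ = lam⁻¹ * J z θ)
    (hPDE : ∀ z θ, (z, θ) ∈ U → ∀ i j,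
      pd j (fun z' => pd i (J z') θ) z - pd i (fun z' => pd j (J z') θ) z =
        ∑ p, ∑ q, η p q * pd p (pd i (J z)) θ * pd q (pd j (J z)) θ)
    (H : (Fin n → ℂ) → (Fin n → ℂ) → ℂ)
    (hH : ∀ z θ, H z θ = ∑ i, z i * pd i (J z) θ) :
    ∀ z θ, (z, θ) ∈ U → ∀ i,
      pd i (fun z' => H z' θ) z =
        -∑ p, ∑ q, η p q * pd p (pd i (J z)) θ * pd q (H z) θ := by
  intro z θ hx i
  have hJ : ContDiffAt ℂ ⊤ (uncurry J) (z, θ) := hsmooth.contDiffAt (hU.mem_nhds hx)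
  have hdiff : ∀ᶠ y in 𝓝 (z, θ), DifferentiableAt ℂ (uncurry J) y :=
    (hJ.eventually (by simp)).mono fun y hy => hy.differentiableAt (by simp)
  set B := fderiv ℂ (fderiv ℂ (uncurry J)) (z, θ)
  have hJ' : HasFDerivAt (fderiv ℂ (uncurry J)) B (z, θ) :=
    ((hJ.fderiv_right (m := 1) le_top).differentiableAt one_ne_zero).hasFDerivAt
  obtain rfl : H = fun z θ => ∑ i, z i * pd i (J z) θ := funext fun z => funext (hH z)
  rw [pd_fst_sum_mul_pd_eq_of_hasFDerivAt_fderiv hdiff hJ']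
  simp only [pd_pd_eq_of_hasFDerivAt_fderiv hdiff hJ',
    pd_sum_mul_pd_eq_of_hasFDerivAt_fderiv hdiff hJ']
  refine joyce_identity_of_fderiv η B _ z i (hJ.isSymmSndFDerivAt (by simp) _ _)
    (fderiv_fderiv_apply_inr_fst_of_homogeneous ?_ hJ'.differentiableAt _) fun j => ?_
  · filter_upwards [hdiff, hU.mem_nhds hx] with y hy hyU using ⟨hy, hhom y.1 y.2 hyU⟩
  · simpa only [pd_fst_pd_eq_of_hasFDerivAt_fderiv hdiff hJ',
      pd_pd_eq_of_hasFDerivAt_fderiv hdiff hJ'] using hPDE z θ hx i j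

/-- If `J` is homogeneous of degree `-1` in `z` (for `λ` near `1`) and satisfies the
Joyce PDE, then `H(z,θ) = ∑_i z_i ∂J/∂θ_i` satisfies
`∂H/∂z_i = -∑_{p,q} η_{pq} (∂²J/∂θ_i∂θ_p)(∂H/∂θ_q)`. -/
theorem joyce_H_identity {n : ℕ} (η : Fin n → Fin n → ℂ)
    (hη : ∀ i j, η i j = -η j i)
    (U : Set ((Fin n → ℂ) × (Fin n → ℂ))) (hU : IsOpen U)
    (hUz : ∀ z θ, (z, θ) ∈ U → ∀ i, z i ≠ 0)
    (J : (Fin n → ℂ) → (Fin n → ℂ) → ℂ)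
    (hsmooth : ContDiffOn ℂ ⊤ (fun p => J p.1 p.2) U)
    (hhom : ∀ z θ, (z, θ) ∈ U →
      ∀ᶠ lam in nhds (1 : ℂ), J (lam • z) θ = lam⁻¹ * J z θ)
    (hPDE : ∀ z θ, (z, θ) ∈ U → ∀ i j,
      pd j (fun z' => pd i (J z') θ) z - pd i (fun z' => pd j (J z') θ) z =
        ∑ p, ∑ q, η p q * pd p (pd i (J z)) θ * pd q (pd j (J z)) θ)
    (H : (Fin n → ℂ) → (Fin n → ℂ) → ℂ)
    (hH : ∀ z θ, H z θ = ∑ i, z i * pd i (J z) θ) :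
    ∀ z θ, (z, θ) ∈ U → ∀ i,
      pd i (fun z' => H z' θ) z =
        -∑ p, ∑ q, η p q * pd p (pd i (J z)) θ * pd q (H z) θ :=
  joyce_H_identity_general η U hU J hsmooth hhom hPDE H hH
end
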